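/- Eventual value of the penalty far to the left (the β accumulation of the best-shift algorithm): if a_{ij} ≠ 0, there exists M ∈ ℝ such that for every candidate value x̂_j < M, p_{ij}(x̂_j, x̄) equals: w_i if a_{ij} > 0 and ȳ_i > b_i; 0 if a_{ij} > 0 and ȳ_i ≤ b_i; −w_i if a_{ij} < 0 and ȳ_i ≤ b_i; and −w_i/2 if a_{ij} < 0 and ȳ_i > b_i. -/

import Mathlib

open Finset

/-- Activity of constraint `i` at the incumbent point `xbar`. -/
noncomputable def activity {m n : ℕ} (a : Fin m → Fin n → ℝ) (xbar : Fin n → ℝ)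
    (i : Fin m) : ℝ :=
  ∑ k, a i k * xbar k

/-- Moved activity of constraint `i` when variable `j` takes candidate value `xhat`. -/
noncomputable def movedActivity {m n : ℕ} (a : Fin m → Fin n → ℝ) (xbar : Fin n → ℝ)
    (j : Fin n) (i : Fin m) (xhat : ℝ) : ℝ :=
  (∑ k ∈ Finset.univ.erase j, a i k * xbar k) + a i j * xhat

/-- Penalty of moving variable `j` from `xbar j` to `xhat` w.r.t. constraint `i`. -/
noncomputable def penalty {m n : ℕ} (a : Fin m → Fin n → ℝ) (b w : Fin m → ℝ)
    (xbar : Fin n → ℝ) (j : Fin n) (i : Fin m) (xhat : ℝ) : ℝ :=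
  if activity a xbar i ≤ b i ∧ movedActivity a xbar j i xhat > b i then -w i
  else if activity a xbar i > b i ∧ movedActivity a xbar j i xhat ≤ b i then w i
  else if activity a xbar i > b i ∧ movedActivity a xbar j i xhat > b i ∧
      movedActivity a xbar j i xhat < activity a xbar i then w i / 2
  else if activity a xbar i > b i ∧ movedActivity a xbar j i xhat > b i ∧
      movedActivity a xbar j i xhat > activity a xbar i then -w i / 2
  else 0

/-- Score of moving variable `j` to candidate value `xhat`. -/
noncomputable def score {m n : ℕ} (a : Fin m → Fin n → ℝ) (b w : Fin m → ℝ)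
    (xbar : Fin n → ℝ) (j : Fin n) (xhat : ℝ) : ℝ :=
  ∑ i, penalty a b w xbar j i xhat

/-- Breakpoint of constraint `i` for variable `j` (meaningful when `a i j ≠ 0`). -/
noncomputable def breakpoint {m n : ℕ} (a : Fin m → Fin n → ℝ) (b : Fin m → ℝ)
    (xbar : Fin n → ℝ) (j : Fin n) (i : Fin m) : ℝ :=
  (b i - ∑ k ∈ Finset.univ.erase j, a i k * xbar k) / a i j

/-! The moved activity is affine in `xhat` with slope `a i j`; it equals `b i` at the breakpoint
and the incumbent activity at `xbar j`. Left of both points, the sign of `a i j` therefore fixes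
on which side of `b i` and of the incumbent activity it lies, and this fixes the penalty. -/

section

variable {m n : ℕ} {a : Fin m → Fin n → ℝ} {b w : Fin m → ℝ} {xbar : Fin n → ℝ}
  {j : Fin n} {i : Fin m} {xhat : ℝ}

theorem movedActivity_self : movedActivity a xbar j i (xbar j) = activity a xbar i := by
  rw [movedActivity, activity, ← Finset.add_sum_erase _ _ (Finset.mem_univ j), add_comm]

theorem movedActivity_breakpoint (ha : a i j ≠ 0) :
    movedActivity a xbar j i (breakpoint a b xbar j i) = b i := by
  rw [movedActivity, breakpoint, mul_div_cancel₀ _ ha, add_sub_cancel]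

theorem movedActivity_strictMono (ha : 0 < a i j) : StrictMono (movedActivity a xbar j i) :=
  fun _ _ h => add_lt_add_right (mul_lt_mul_of_pos_left h ha) _

theorem movedActivity_strictAnti (ha : a i j < 0) : StrictAnti (movedActivity a xbar j i) :=
  fun _ _ h => add_lt_add_right (mul_lt_mul_of_neg_left h ha) _

theorem movedActivity_lt_of_pos_of_lt_breakpoint (ha : 0 < a i j)
    (h : xhat < breakpoint a b xbar j i) :
    movedActivity a xbar j i xhat < b i :=
  (movedActivity_strictMono ha h).trans_eq (movedActivity_breakpoint ha.ne')

theorem lt_movedActivity_of_neg_of_lt_breakpoint (ha : a i j < 0)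
    (h : xhat < breakpoint a b xbar j i) :
    b i < movedActivity a xbar j i xhat :=
  (movedActivity_breakpoint ha.ne).symm.trans_lt (movedActivity_strictAnti ha h)

theorem penalty_eq_weight_of_repair (h₀ : b i < activity a xbar i)
    (h : movedActivity a xbar j i xhat ≤ b i) : penalty a b w xbar j i xhat = w i := by
  rw [penalty, if_neg fun h' => (h₀.not_ge h'.1).elim, if_pos ⟨h₀, h⟩]

theorem penalty_eq_zero_of_stays_satisfied (h₀ : activity a xbar i ≤ b i)
    (h : movedActivity a xbar j i xhat ≤ b i) : penalty a b w xbar j i xhat = 0 := by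
  simp only [penalty, gt_iff_lt, h₀.not_gt, h.not_gt, false_and, and_false, if_false]

theorem penalty_eq_neg_weight_of_break (h₀ : activity a xbar i ≤ b i)
    (h : b i < movedActivity a xbar j i xhat) : penalty a b w xbar j i xhat = -w i := by
  rw [penalty, if_pos ⟨h₀, h⟩]

theorem penalty_eq_neg_half_weight_of_worsen (h₀ : b i < activity a xbar i)
    (h : activity a xbar i < movedActivity a xbar j i xhat) :
    penalty a b w xbar j i xhat = -w i / 2 := by
  have hb : b i < movedActivity a xbar j i xhat := h₀.trans h
  rw [penalty, if_neg fun h' => (h₀.not_ge h'.1).elim, if_neg fun h' => (hb.not_ge h'.2).elim,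
    if_neg fun h' => (h.not_gt h'.2.2).elim, if_pos ⟨h₀, hb, h⟩]

end

theorem penalty_eventually_left_general
    {m n : ℕ} (a : Fin m → Fin n → ℝ) (b w : Fin m → ℝ)
    (xbar : Fin n → ℝ) (j : Fin n) (i : Fin m) :
    ∃ M : ℝ, ∀ xhat : ℝ, xhat < M →
      (a i j > 0 → activity a xbar i > b i → penalty a b w xbar j i xhat = w i) ∧
      (a i j > 0 → activity a xbar i ≤ b i → penalty a b w xbar j i xhat = 0) ∧
      (a i j < 0 → activity a xbar i ≤ b i → penalty a b w xbar j i xhat = -w i) ∧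
      (a i j < 0 → activity a xbar i > b i → penalty a b w xbar j i xhat = -w i / 2) := by
  refine ⟨min (breakpoint a b xbar j i) (xbar j), fun xhat hx => ?_⟩
  have hbp : xhat < breakpoint a b xbar j i := hx.trans_le (min_le_left _ _)
  have hxb : xhat < xbar j := hx.trans_le (min_le_right _ _)
  refine ⟨fun hpos hact => ?_, fun hpos hact => ?_, fun hneg hact => ?_, fun hneg hact => ?_⟩
  · exact penalty_eq_weight_of_repair hact (movedActivity_lt_of_pos_of_lt_breakpoint hpos hbp).le
  · exact penalty_eq_zero_of_stays_satisfied hact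
      (movedActivity_lt_of_pos_of_lt_breakpoint hpos hbp).le
  · exact penalty_eq_neg_weight_of_break hact (lt_movedActivity_of_neg_of_lt_breakpoint hneg hbp)
  · refine penalty_eq_neg_half_weight_of_worsen hact ?_
    simpa only [movedActivity_self] using movedActivity_strictAnti (xbar := xbar) hneg hxb

/-- Eventual value of the penalty far to the left (the β accumulation of
the best-shift algorithm). -/
theorem penalty_eventually_left
    {m n : ℕ} (a : Fin m → Fin n → ℝ) (b w : Fin m → ℝ)
    (xbar : Fin n → ℝ) (j : Fin n) (i : Fin m)
    (hw : ∀ i, 0 ≤ w i) (ha : a i j ≠ 0) :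
    ∃ M : ℝ, ∀ xhat : ℝ, xhat < M →
      (a i j > 0 → activity a xbar i > b i → penalty a b w xbar j i xhat = w i) ∧
      (a i j > 0 → activity a xbar i ≤ b i → penalty a b w xbar j i xhat = 0) ∧
      (a i j < 0 → activity a xbar i ≤ b i → penalty a b w xbar j i xhat = -w i) ∧
      (a i j < 0 → activity a xbar i > b i → penalty a b w xbar j i xhat = -w i / 2) :=
  penalty_eventually_left_general a b w xbar j i
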